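/- The elements 𝖩_i := (T_{i-1}^{-1} ⋯ T_1^{-1} · T_0 · T_1 ⋯ T_{i-1}) · (T_i T_{i+1} ⋯ T_{n-1} · T_{n-1} ⋯ T_{i+1} T_i) for i = 1, …, n (the second factor being the identity when i = n) pairwise commute: 𝖩_i 𝖩_j = 𝖩_j 𝖩_i for all 1 ≤ i, j ≤ n. -/

import Mathlib

/-!
Since `𝖩_{i+1} = T_i⁻¹ 𝖩_i T_i⁻¹` and `T_j` commutes with `𝖩_i` for `i < j`, it suffices to show that
adjacent elements commute. Writing `𝖩_i = A (T_i B T_i)` and `𝖩_{i+1} = (T_i⁻¹ A T_i) B` with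
commuting `A` and `B`, one gets `𝖩_i 𝖩_{i+1} = (A T_i A)(B T_i B)` and
`𝖩_{i+1} 𝖩_i = T_i⁻¹ (A T_i A)(B T_i B) T_i`, so it remains to see that `T_i` commutes with
`A T_i A` (the type `C` relation, transported from `i = 1` along the braid relations) and with
`B T_i B` (by downward induction on `i`, starting from `B = 1` at `i = n - 1`).
-/

/-- The ordered product `T a * T (a+1) * ⋯ * T b` (equal to `1` when `b < a`). -/
def upProd {G : Type*} [Monoid G] (T : ℕ → G) (a b : ℕ) : G :=
  ((List.range (b + 1 - a)).map fun k => T (a + k)).prod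

/-- The ordered product `T b * T (b-1) * ⋯ * T a` (equal to `1` when `b < a`). -/
def downProd {G : Type*} [Monoid G] (T : ℕ → G) (b a : ℕ) : G :=
  ((List.range (b + 1 - a)).map fun k => T (b - k)).prod

section Products

variable {G : Type*} [Monoid G] (T : ℕ → G) {a b : ℕ}

lemma upProd_of_lt (h : b < a) : upProd T a b = 1 := by
  simp [upProd, show b + 1 - a = 0 by omega]

lemma downProd_of_lt (h : b < a) : downProd T b a = 1 := by
  simp [downProd, show b + 1 - a = 0 by omega]

lemma upProd_eq_mul (h : a ≤ b) : upProd T a b = T a * upProd T (a + 1) b := by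
  rw [upProd, show b + 1 - a = b + 1 - (a + 1) + 1 by omega, List.prod_range_succ', upProd]
  simp only [add_zero, add_assoc, add_comm 1]

lemma upProd_succ (h : a ≤ b + 1) : upProd T a (b + 1) = upProd T a b * T (b + 1) := by
  rw [upProd, show b + 1 + 1 - a = b + 1 - a + 1 by omega, List.prod_range_succ, upProd,
    show a + (b + 1 - a) = b + 1 by omega]

lemma downProd_succ (h : a ≤ b + 1) : downProd T (b + 1) a = T (b + 1) * downProd T b a := by
  rw [downProd, show b + 1 + 1 - a = b + 1 - a + 1 by omega, List.prod_range_succ', downProd]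
  simp only [Nat.sub_zero, Nat.succ_sub_succ]

lemma downProd_eq_mul (h : a ≤ b) : downProd T b a = downProd T b (a + 1) * T a := by
  rw [downProd, show b + 1 - a = b + 1 - (a + 1) + 1 by omega, List.prod_range_succ, downProd,
    show b - (b + 1 - (a + 1)) = a by omega]

variable {T} {x : G}

lemma Commute.upProd_right (h : ∀ k, a ≤ k → k ≤ b → Commute x (T k)) :
    Commute x (upProd T a b) :=
  Commute.list_prod_right _ _ <| by
    simp only [List.mem_map, List.mem_range]
    rintro _ ⟨k, hk, rfl⟩
    exact h _ (by omega) (by omega)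

lemma Commute.downProd_right (h : ∀ k, a ≤ k → k ≤ b → Commute x (T k)) :
    Commute x (downProd T b a) :=
  Commute.list_prod_right _ _ <| by
    simp only [List.mem_map, List.mem_range]
    rintro _ ⟨k, hk, rfl⟩
    exact h _ (by omega) (by omega)

end Products

section BraidRelation

variable {G : Type*} [Group G] {a b : G}

lemma commute_sandwich_of_braid (hab : a * b * a = b * a * b) {Z : G} (hZ : Commute a Z) :
    Commute b (a * (b * Z * b) * a) :=
  calc b * (a * (b * Z * b) * a)
      = (b * a * b) * Z * (b * a) := by group
    _ = a * b * (a * Z) * b * a := by rw [← hab]; group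
    _ = a * b * Z * (a * b * a) := by rw [hZ.eq]; group
    _ = a * (b * Z * b) * a * b := by rw [hab]; group

lemma commute_sandwich_sandwich_of_braid (hab : a * b * a = b * a * b) {Z : G}
    (hZ : Commute a Z) (hbZ : Commute b (Z * b * Z)) :
    Commute a ((b * Z * b) * a * (b * Z * b)) := by
  have key : (b * Z * b) * a * (b * Z * b) = (b * a) * (Z * b * Z) * (a * b) :=
    calc (b * Z * b) * a * (b * Z * b)
        = b * Z * (b * a * b) * Z * b := by group
      _ = b * Z * (a * b * a) * Z * b := by rw [hab]
      _ = b * (Z * a) * b * a * Z * b := by group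
      _ = b * (a * Z) * b * a * Z * b := by rw [hZ.eq]
      _ = b * a * Z * b * (a * Z) * b := by group
      _ = b * a * Z * b * (Z * a) * b := by rw [hZ.eq]
      _ = (b * a) * (Z * b * Z) * (a * b) := by group
  show a * _ = _ * a
  calc a * ((b * Z * b) * a * (b * Z * b))
      = (a * b * a) * (Z * b * Z) * (a * b) := by rw [key]; group
    _ = b * a * (b * (Z * b * Z)) * (a * b) := by rw [hab]; group
    _ = (b * a) * (Z * b * Z) * (b * a * b) := by rw [hbZ.eq]; group
    _ = (b * a) * (Z * b * Z) * (a * b * a) := by rw [hab]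
    _ = ((b * Z * b) * a * (b * Z * b)) * a := by rw [key]; group

lemma conj_eq_of_braid (hab : a * b * a = b * a * b) : a * b * a⁻¹ = b⁻¹ * a * b :=
  calc a * b * a⁻¹ = b⁻¹ * (b * a * b) * a⁻¹ := by group
    _ = b⁻¹ * (a * b * a) * a⁻¹ := by rw [hab]
    _ = b⁻¹ * a * b := by group

/-- The map `x ↦ (b * a)⁻¹ * x * (b * a)` sends `a` to `b` and `A * a * A` to the sandwich. -/
lemma commute_conj_sandwich_of_braid (hab : a * b * a = b * a * b) {A : G}
    (hbA : Commute b A) (haA : Commute a (A * a * A)) :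
    Commute b ((a⁻¹ * A * a) * b * (a⁻¹ * A * a)) := by
  have hb : (b * a)⁻¹ * a * (b * a) = b :=
    calc (b * a)⁻¹ * a * (b * a) = (b * a)⁻¹ * (a * b * a) := by group
      _ = b := by rw [hab]; group
  have hX : (b * a)⁻¹ * (A * a * A) * (b * a) = (a⁻¹ * A * a) * b * (a⁻¹ * A * a) :=
    calc (b * a)⁻¹ * (A * a * A) * (b * a)
        = a⁻¹ * (b⁻¹ * A) * a * (A * b) * a := by group
      _ = a⁻¹ * (A * b⁻¹) * a * (b * A) * a := by rw [hbA.inv_left.eq, hbA.eq]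
      _ = a⁻¹ * A * (b⁻¹ * a * b) * A * a := by group
      _ = a⁻¹ * A * (a * b * a⁻¹) * A * a := by rw [conj_eq_of_braid hab]
      _ = (a⁻¹ * A * a) * b * (a⁻¹ * A * a) := by group
  have := haA.conj (b * a)⁻¹
  rwa [inv_inv, hb, hX] at this

lemma commute_of_commute_sandwiches {A B : G} (hAB : Commute A B)
    (hA : Commute a (A * a * A)) (hB : Commute a (B * a * B)) :
    Commute (A * (a * B * a)) ((a⁻¹ * A * a) * B) := by
  have hprod : A * (a * B * a) * ((a⁻¹ * A * a) * B) = (A * a * A) * (B * a * B) :=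
    calc A * (a * B * a) * ((a⁻¹ * A * a) * B)
        = A * a * (B * A) * a * B := by group
      _ = A * a * (A * B) * a * B := by rw [hAB.eq]
      _ = (A * a * A) * (B * a * B) := by group
  have hprod' : (a⁻¹ * A * a) * B * (A * (a * B * a)) = a⁻¹ * ((A * a * A) * (B * a * B)) * a :=
    calc (a⁻¹ * A * a) * B * (A * (a * B * a))
        = a⁻¹ * (A * a * (B * A) * a * B) * a := by group
      _ = a⁻¹ * (A * a * (A * B) * a * B) * a := by rw [hAB.eq]
      _ = a⁻¹ * ((A * a * A) * (B * a * B)) * a := by group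
  show _ = _
  rw [hprod, hprod', mul_assoc a⁻¹, ← (hA.mul_right hB).eq, inv_mul_cancel_left]

end BraidRelation

section Elements

variable {G : Type*} [Group G]

def palindromeProd {M : Type*} [Monoid M] (T : ℕ → M) (n i : ℕ) : M :=
  upProd T i (n - 1) * downProd T (n - 1) i

def conjT0 (T : ℕ → G) (i : ℕ) : G :=
  downProd (fun k => (T k)⁻¹) (i - 1) 1 * T 0 * upProd T 1 (i - 1)

def sfJ (T : ℕ → G) (n i : ℕ) : G := conjT0 T i * palindromeProd T n i

variable (T : ℕ → G) {n i : ℕ}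

lemma palindromeProd_of_lt (h : n - 1 < i) : palindromeProd T n i = 1 := by
  rw [palindromeProd, upProd_of_lt T h, downProd_of_lt T h, one_mul]

lemma palindromeProd_eq (h : i ≤ n - 1) : palindromeProd T n i = T i * palindromeProd T n (i + 1) * T i := by
  rw [palindromeProd, upProd_eq_mul T h, downProd_eq_mul T h, palindromeProd]
  simp only [mul_assoc]

lemma conjT0_one : conjT0 T 1 = T 0 := by
  simp [conjT0, upProd_of_lt, downProd_of_lt]

lemma conjT0_succ (hi : 1 ≤ i) : conjT0 T (i + 1) = (T i)⁻¹ * conjT0 T i * T i := by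
  obtain ⟨m, rfl⟩ := Nat.exists_eq_add_of_le' hi
  simp only [conjT0, Nat.add_sub_cancel, downProd_succ _ hi, upProd_succ _ hi]
  group

lemma sfJ_succ (hi : 1 ≤ i) (hin : i ≤ n - 1) :
    sfJ T n (i + 1) = (T i)⁻¹ * sfJ T n i * (T i)⁻¹ := by
  rw [sfJ, sfJ, conjT0_succ T hi, palindromeProd_eq T hin]
  group

variable {T} {x : G}

lemma Commute.conjT0_right (h : ∀ k ≤ i - 1, Commute x (T k)) : Commute x (conjT0 T i) :=
  ((Commute.downProd_right fun k _ hk => (h k hk).inv_right).mul_right (h 0 (Nat.zero_le _))).mul_right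
    (Commute.upProd_right fun k _ hk => h k hk)

end Elements

section TypeCBraid

variable {G : Type*} [Group G] {n : ℕ} {T : ℕ → G} {i j : ℕ}
  (hbraid : ∀ i, 1 ≤ i → i ≤ n - 2 → T i * T (i + 1) * T i = T (i + 1) * T i * T (i + 1))
  (hcomm : ∀ i j, i ≤ n - 1 → j ≤ n - 1 → i + 2 ≤ j → T i * T j = T j * T i)
  (hC : T 1 * T 0 * T 1 * T 0 = T 0 * T 1 * T 0 * T 1)

include hcomm

lemma commute_T_conjT0_of_lt (hi : 1 ≤ i) (hij : i < j) (hj : j ≤ n - 1) :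
    Commute (T j) (conjT0 T i) :=
  Commute.conjT0_right fun k _ => (hcomm k j (by omega) hj (by omega)).symm

lemma commute_T_palindromeProd_of_add_two_le (hji : j + 2 ≤ i) (hj : j ≤ n - 1) :
    Commute (T j) (palindromeProd T n i) :=
  (Commute.upProd_right fun _ _ hk => hcomm j _ hj hk (by omega)).mul_right
    (Commute.downProd_right fun _ _ hk => hcomm j _ hj hk (by omega))

lemma commute_conjT0_palindromeProd (hi : 1 ≤ i) (hij : i < j) (hin : i ≤ n) :
    Commute (conjT0 T i) (palindromeProd T n j) :=
  (Commute.conjT0_right fun _ _ =>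
    (commute_T_palindromeProd_of_add_two_le hcomm (by omega) (by omega)).symm).symm

include hbraid

lemma commute_T_succ_palindromeProd (hi : 1 ≤ i) (hin : i + 1 ≤ n - 1) :
    Commute (T (i + 1)) (palindromeProd T n i) := by
  rw [palindromeProd_eq T (i := i) (by omega), palindromeProd_eq T (i := i + 1) hin]
  exact commute_sandwich_of_braid (hbraid i hi (by omega))
    (commute_T_palindromeProd_of_add_two_le hcomm le_rfl (by omega))

lemma commute_T_palindromeProd_of_lt (hi : 1 ≤ i) (hij : i < j) (hj : j ≤ n - 1) :
    Commute (T j) (palindromeProd T n i) := by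
  have hij' : i ≤ j - 1 := by omega
  induction hij' using Nat.decreasingInduction with
  | self => simpa only [Nat.sub_add_cancel (by omega : 1 ≤ j)] using
      commute_T_succ_palindromeProd hbraid hcomm (i := j - 1) (by omega) (by omega)
  | of_succ i _ ih =>
    rw [palindromeProd_eq T (by omega)]
    have hTi : Commute (T j) (T i) := (hcomm i j (by omega) hj (by omega)).symm
    exact (hTi.mul_right (ih (by omega) (by omega))).mul_right hTi

lemma commute_T_sandwich_palindromeProd (hi : 1 ≤ i) (hin : i ≤ n - 1) :
    Commute (T i) (palindromeProd T n (i + 1) * T i * palindromeProd T n (i + 1)) := by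
  induction hin using Nat.decreasingInduction with
  | self => simp [palindromeProd_of_lt T (Nat.lt_succ_self (n - 1))]
  | of_succ i hin ih =>
    rw [palindromeProd_eq T (i := i + 1) (by omega)]
    exact commute_sandwich_sandwich_of_braid (hbraid i hi (by omega))
      (commute_T_palindromeProd_of_add_two_le hcomm le_rfl (by omega)) (ih (by omega))

lemma commute_T_sfJ_of_lt (hi : 1 ≤ i) (hij : i < j) (hj : j ≤ n - 1) :
    Commute (T j) (sfJ T n i) :=
  (commute_T_conjT0_of_lt hcomm hi hij hj).mul_right (commute_T_palindromeProd_of_lt hbraid hcomm hi hij hj)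

include hC

lemma commute_T_sandwich_conjT0 (hi : 1 ≤ i) (hin : i ≤ n - 1) :
    Commute (T i) (conjT0 T i * T i * conjT0 T i) := by
  induction i, hi using Nat.le_induction with
  | base =>
    rw [conjT0_one]
    simpa only [Commute, SemiconjBy, mul_assoc] using hC
  | succ i hi ih =>
    rw [conjT0_succ T hi]
    exact commute_conj_sandwich_of_braid (hbraid i hi (by omega))
      (commute_T_conjT0_of_lt hcomm hi (by omega) hin) (ih (by omega))

lemma sfJ_commute_sfJ_succ (hi : 1 ≤ i) (hin : i + 1 ≤ n) :
    Commute (sfJ T n i) (sfJ T n (i + 1)) := by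
  rw [sfJ, sfJ, palindromeProd_eq T (i := i) (by omega), conjT0_succ T hi]
  exact commute_of_commute_sandwiches (commute_conjT0_palindromeProd hcomm hi (by omega) (by omega))
    (commute_T_sandwich_conjT0 hbraid hcomm hC hi (by omega))
    (commute_T_sandwich_palindromeProd hbraid hcomm hi (by omega))

lemma sfJ_commute_sfJ_of_lt (hi : 1 ≤ i) (hij : i < j) (hj : j ≤ n) :
    Commute (sfJ T n i) (sfJ T n j) := by
  induction j, hij using Nat.le_induction with
  | base => exact sfJ_commute_sfJ_succ hbraid hcomm hC hi hj
  | succ j hij ih =>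
    rw [sfJ_succ T (by omega) (by omega)]
    have hTj := (commute_T_sfJ_of_lt hbraid hcomm hi hij (by omega)).symm.inv_right
    exact (hTj.mul_right (ih (by omega))).mul_right hTj

end TypeCBraid

theorem sfJ_commute_general {G : Type*} [Group G] (n : ℕ) (T : ℕ → G)
    (hbraid : ∀ i, 1 ≤ i → i ≤ n - 2 →
      T i * T (i + 1) * T i = T (i + 1) * T i * T (i + 1))
    (hcomm : ∀ i j, i ≤ n - 1 → j ≤ n - 1 → i + 2 ≤ j → T i * T j = T j * T i)
    (hC : T 1 * T 0 * T 1 * T 0 = T 0 * T 1 * T 0 * T 1) :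
    ∀ i j, 1 ≤ i → i ≤ n → 1 ≤ j → j ≤ n →
      ((downProd (fun k => (T k)⁻¹) (i - 1) 1 * T 0 * upProd T 1 (i - 1)) *
          (upProd T i (n - 1) * downProd T (n - 1) i)) *
        ((downProd (fun k => (T k)⁻¹) (j - 1) 1 * T 0 * upProd T 1 (j - 1)) *
          (upProd T j (n - 1) * downProd T (n - 1) j)) =
      ((downProd (fun k => (T k)⁻¹) (j - 1) 1 * T 0 * upProd T 1 (j - 1)) *
          (upProd T j (n - 1) * downProd T (n - 1) j)) *
        ((downProd (fun k => (T k)⁻¹) (i - 1) 1 * T 0 * upProd T 1 (i - 1)) *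
          (upProd T i (n - 1) * downProd T (n - 1) i)) := by
  intro i j hi hin hj hjn
  change sfJ T n i * sfJ T n j = sfJ T n j * sfJ T n i
  rcases lt_trichotomy i j with h | rfl | h
  · exact sfJ_commute_sfJ_of_lt hbraid hcomm hC hi h hjn
  · rfl
  · exact (sfJ_commute_sfJ_of_lt hbraid hcomm hC hj h hin).symm

/-- In the braid group of type `C`, the elements
`𝖩_i = (T_{i-1}⁻¹ ⋯ T_1⁻¹ T_0 T_1 ⋯ T_{i-1}) (T_i ⋯ T_{n-1} · T_{n-1} ⋯ T_i)`
pairwise commute. -/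
theorem sfJ_commute {G : Type*} [Group G] (n : ℕ) (hn : 2 ≤ n) (T : ℕ → G)
    (hbraid : ∀ i, 1 ≤ i → i ≤ n - 2 →
      T i * T (i + 1) * T i = T (i + 1) * T i * T (i + 1))
    (hcomm : ∀ i j, i ≤ n - 1 → j ≤ n - 1 → i + 2 ≤ j → T i * T j = T j * T i)
    (hC : T 1 * T 0 * T 1 * T 0 = T 0 * T 1 * T 0 * T 1) :
    ∀ i j, 1 ≤ i → i ≤ n → 1 ≤ j → j ≤ n →
      ((downProd (fun k => (T k)⁻¹) (i - 1) 1 * T 0 * upProd T 1 (i - 1)) *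
          (upProd T i (n - 1) * downProd T (n - 1) i)) *
        ((downProd (fun k => (T k)⁻¹) (j - 1) 1 * T 0 * upProd T 1 (j - 1)) *
          (upProd T j (n - 1) * downProd T (n - 1) j)) =
      ((downProd (fun k => (T k)⁻¹) (j - 1) 1 * T 0 * upProd T 1 (j - 1)) *
          (upProd T j (n - 1) * downProd T (n - 1) j)) *
        ((downProd (fun k => (T k)⁻¹) (i - 1) 1 * T 0 * upProd T 1 (i - 1)) *
          (upProd T i (n - 1) * downProd T (n - 1) i)) :=
  sfJ_commute_general n T hbraid hcomm hC
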